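/- Let f = x₀²y₀ − (x₀+x₁)²y₁ + x₁²y₂ and let J be the saturation of the ideal generated by Ann(f)₂ in k[α₀,α₁,β₀,β₁,β₂]. Then β₀, β₁, β₂ ∈ J, so the Hilbert function of Sym V*/J in degree 1 is at most 2. -/

import Mathlib

/-!
`Ann(f)₂` contains every product `βᵢβⱼ`, since `f` is linear in the `y`'s, and the mixed quadrics
`α₁β₀`, `α₀β₂`, `(α₀ − α₁)β₁`, `α₀β₀ + α₀β₁ + α₁β₂`. So for each `βₗ` there is a linear form `ℓ`
in the `α`'s with `ℓβₗ` in the ideal, and combining the mixed quadrics puts the cube of the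
complementary `α` times `βₗ` in it as well (`α₀³β₀`, `α₁³β₁`, `α₁³β₂`). As that `α`, `ℓ` and the
`β`'s generate the irrelevant ideal `m`, `βₗ · m³` lies in the ideal, i.e. `βₗ ∈ J`. Three
independent linear forms in `J` bound its Hilbert function in degree 1 by `5 − 3`.
-/

open MvPolynomial

noncomputable section

/-- The differential operator with constant coefficients corresponding to a monomial
exponent `m` (composition of partial derivatives). -/
def monOp (k : Type*) [CommSemiring k] {n : ℕ} (m : Fin n →₀ ℕ) :
    Module.End k (MvPolynomial (Fin n) k) :=
  (List.ofFn fun i : Fin n =>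
    ((pderiv i).toLinearMap : Module.End k (MvPolynomial (Fin n) k)) ^ m i).prod

/-- Apolarity contraction: the linear map `θ ↦ θ ⌟ f`, where a dual polynomial `θ`
acts on `f` as a differential operator with constant coefficients. -/
def contractMap {k : Type*} [CommSemiring k] {n : ℕ} (f : MvPolynomial (Fin n) k) :
    MvPolynomial (Fin n) k →ₗ[k] MvPolynomial (Fin n) k :=
  Finsupp.lsum k (fun m => LinearMap.toSpanSingleton k _ ((monOp k m) f)) ∘ₗ
    (AddMonoidAlgebra.coeffLinearEquiv k).toLinearMap

/-- The irrelevant maximal ideal `(X 0, …, X (n-1))`. -/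
def irrel (k : Type*) [CommSemiring k] (n : ℕ) : Ideal (MvPolynomial (Fin n) k) :=
  Ideal.span (Set.range X)

/-- Saturation of an ideal with respect to the irrelevant maximal ideal. -/
def satur {k : Type*} [CommRing k] {n : ℕ} (I : Ideal (MvPolynomial (Fin n) k)) :
    Ideal (MvPolynomial (Fin n) k) :=
  ⨆ m : ℕ, Submodule.colon I ((irrel k n ^ m : Ideal (MvPolynomial (Fin n) k)) : Submodule _ _)

/-- An ideal is saturated (with respect to the irrelevant maximal ideal). -/
def IsSat {k : Type*} [CommRing k] {n : ℕ} (I : Ideal (MvPolynomial (Fin n) k)) : Prop :=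
  Submodule.colon I ((irrel k n : Ideal _) : Submodule _ _) ≤ I

/-- An ideal is homogeneous. -/
def IsHomogIdeal {k : Type*} [CommSemiring k] {n : ℕ}
    (I : Ideal (MvPolynomial (Fin n) k)) : Prop :=
  ∀ g ∈ I, ∀ j : ℕ, homogeneousComponent j g ∈ I

/-- Hilbert function of `S/I` in degree `i`. -/
def HFq (k : Type*) [Field k] {n : ℕ} (I : Ideal (MvPolynomial (Fin n) k)) (i : ℕ) : ℕ :=
  Module.finrank k (homogeneousSubmodule (Fin n) k i) -
    Module.finrank k (Submodule.restrictScalars k I ⊓ homogeneousSubmodule (Fin n) k i :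
      Submodule k (MvPolynomial (Fin n) k))

/-- Hilbert function of the apolar algebra `Sym V⋆ / Ann(f)` in degree `i`. -/
def HFapolar {k : Type*} [Field k] {n : ℕ} (f : MvPolynomial (Fin n) k) (i : ℕ) : ℕ :=
  Module.finrank k (homogeneousSubmodule (Fin n) k i) -
    Module.finrank k (LinearMap.ker (contractMap f) ⊓ homogeneousSubmodule (Fin n) k i :
      Submodule k (MvPolynomial (Fin n) k))

/-- Zariski closure of a subset of a `k`-vector space: common zeros of all polynomial
functions (elements of the subalgebra of functions generated by linear functionals)
vanishing on the subset. -/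
def zcl (k : Type*) {M : Type*} [Field k] [AddCommGroup M] [Module k M] (A : Set M) : Set M :=
  {p | ∀ F : M → k,
    F ∈ Algebra.adjoin k (Set.range fun φ : Module.Dual k M => (φ : M → k)) →
    (∀ a ∈ A, F a = 0) → F p = 0}

end


open MvPolynomial

theorem MvPolynomial.pderiv_pderiv_comm {k σ : Type*} [CommRing k] (i j : σ)
    (p : MvPolynomial σ k) : pderiv i (pderiv j p) = pderiv j (pderiv i p) := by
  have h : ⁅pderiv i, pderiv j⁆ = (0 : Derivation k (MvPolynomial σ k) _) :=
    derivation_ext fun s => by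
      classical
      rw [Derivation.commutator_apply]
      simp [pderiv_X, Pi.single_apply, apply_ite]
  rw [← sub_eq_zero, ← Derivation.commutator_apply, h, Derivation.zero_apply]

section Contraction

variable {k : Type*} [CommRing k] {n : ℕ}

theorem commute_pderiv (i j : Fin n) :
    Commute ((pderiv i).toLinearMap : Module.End k (MvPolynomial (Fin n) k))
      (pderiv j).toLinearMap :=
  LinearMap.ext (pderiv_pderiv_comm i j)

theorem pairwise_commute_pderiv_pow (m : Fin n →₀ ℕ) :
    ((Finset.univ : Finset (Fin n)) : Set (Fin n)).Pairwise (Function.onFun Commute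
      fun i => ((pderiv i).toLinearMap : Module.End k (MvPolynomial (Fin n) k)) ^ m i) :=
  fun i _ j _ _ => (commute_pderiv i j).pow_pow _ _

theorem monOp_eq_noncommProd (m : Fin n →₀ ℕ) :
    monOp k m = Finset.univ.noncommProd _ (pairwise_commute_pderiv_pow m) := by
  simp [monOp, Finset.noncommProd]

theorem monOp_add (m m' : Fin n →₀ ℕ) : monOp k (m + m') = monOp k m * monOp k m' := by
  simp only [monOp_eq_noncommProd, Finsupp.add_apply, pow_add]
  exact Finset.noncommProd_mul_distrib _ _ _ _ fun i _ j _ _ => (commute_pderiv i j).pow_pow _ _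

theorem monOp_single (i : Fin n) (e : ℕ) :
    monOp k (Finsupp.single i e) = (pderiv i).toLinearMap ^ e := by
  classical
  rw [monOp_eq_noncommProd, ← Finset.noncommProd_erase_mul _ (Finset.mem_univ i) _
    (pairwise_commute_pderiv_pow _), Finsupp.single_eq_same]
  convert one_mul _
  refine (Finset.noncommProd_eq_pow_card _ _ _ 1 fun t ht => ?_).trans (one_pow _)
  simp [Finsupp.single_eq_of_ne (Finset.ne_of_mem_erase ht)]

theorem contractMap_monomial (f : MvPolynomial (Fin n) k) (m : Fin n →₀ ℕ) (c : k) :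
    contractMap f (monomial m c) = c • monOp k m f := by
  simp [contractMap]

theorem contractMap_X_mul_X (f : MvPolynomial (Fin n) k) (i j : Fin n) :
    contractMap f (X i * X j) = pderiv i (pderiv j f) := by
  rw [X, X, monomial_mul, one_mul, contractMap_monomial, one_smul, monOp_add, monOp_single,
    monOp_single, pow_one, pow_one]
  rfl

noncomputable def quadricApolarIdeal (f : MvPolynomial (Fin n) k) :
    Ideal (MvPolynomial (Fin n) k) :=
  Ideal.span ((LinearMap.ker (contractMap f) ⊓ homogeneousSubmodule (Fin n) k 2 :
    Submodule k (MvPolynomial (Fin n) k)) : Set (MvPolynomial (Fin n) k))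

theorem mem_quadricApolarIdeal {f g : MvPolynomial (Fin n) k} (hf : contractMap f g = 0)
    (hg : g.IsHomogeneous 2) : g ∈ quadricApolarIdeal f :=
  Ideal.subset_span ⟨hf, hg⟩

theorem X_mul_X_mem_quadricApolarIdeal {f : MvPolynomial (Fin n) k} {i j : Fin n}
    (h : pderiv i (pderiv j f) = 0) : X i * X j ∈ quadricApolarIdeal f :=
  mem_quadricApolarIdeal ((contractMap_X_mul_X f i j).trans h)
    ((isHomogeneous_X k i).mul (isHomogeneous_X k j))

end Contraction

theorem Ideal.sup_pow_le_pow_sup {R : Type*} [CommSemiring R] (I J : Ideal R) (n : ℕ) :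
    (I ⊔ J) ^ n ≤ I ^ n ⊔ J := by
  induction n with
  | zero => simp
  | succ n ih =>
    calc (I ⊔ J) ^ (n + 1) = (I ⊔ J) ^ n * (I ⊔ J) := pow_succ _ _
      _ ≤ (I ^ n ⊔ J) * (I ⊔ J) := Ideal.mul_mono_left ih
      _ ≤ I ^ (n + 1) ⊔ J := by
        rw [Ideal.mul_sup, Ideal.sup_mul, Ideal.sup_mul, pow_succ]
        exact sup_le (sup_le le_sup_left (Ideal.mul_le_left.trans le_sup_right))
          (sup_le (Ideal.mul_le_right.trans le_sup_right) (Ideal.mul_le_right.trans le_sup_right))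

theorem Ideal.pow_le_of_le_span_singleton_sup {R : Type*} [CommSemiring R] {M K L : Ideal R}
    {x : R} {n : ℕ} (hM : M ≤ Ideal.span {x} ⊔ L) (hx : x ^ n ∈ K) (hL : L ≤ K) : M ^ n ≤ K :=
  calc M ^ n ≤ (Ideal.span {x} ⊔ L) ^ n := Ideal.pow_right_mono hM n
    _ ≤ Ideal.span {x ^ n} ⊔ L := by
      simpa only [Ideal.span_singleton_pow] using Ideal.sup_pow_le_pow_sup (Ideal.span {x}) L n
    _ ≤ K := sup_le ((Ideal.span_singleton_le_iff_mem K).2 hx) hL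

section Saturation

variable {k : Type*} [CommRing k] {n : ℕ}

theorem irrel_le_iff {M : Ideal (MvPolynomial (Fin n) k)} : irrel k n ≤ M ↔ ∀ i, X i ∈ M := by
  simp [irrel, Ideal.span_le, Set.range_subset_iff]

theorem mem_satur_of_pow_le_colon {I : Ideal (MvPolynomial (Fin n) k)}
    {p : MvPolynomial (Fin n) k} {m : ℕ} (h : irrel k n ^ m ≤ I.colon {p}) : p ∈ satur I :=
  Submodule.mem_iSup_of_mem m <| Submodule.mem_colon.2 fun q hq => by
    simpa [mul_comm] using h hq

end Saturation

section HilbertFunction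

variable {k : Type*} [Field k] {n : ℕ}

theorem finrank_homogeneousSubmodule_one :
    Module.finrank k (homogeneousSubmodule (Fin n) k 1) = n := by
  rw [homogeneousSubmodule_one_eq_span_X, finrank_span_eq_card (linearIndependent_X (Fin n) k),
    Fintype.card_fin]

theorem HFq_one_le_of_X_mem (I : Ideal (MvPolynomial (Fin n) k)) (s : Finset (Fin n))
    (hs : ∀ i ∈ s, X i ∈ I) : HFq k I 1 ≤ n - s.card := by
  unfold HFq
  set T := Submodule.restrictScalars k I ⊓ homogeneousSubmodule (Fin n) k 1
  have : FiniteDimensional k (homogeneousSubmodule (Fin n) k 1) :=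
    Module.Finite.iff_fg.2 (homogeneousSubmodule_fg _ _ 1)
  have : FiniteDimensional k T := Submodule.finiteDimensional_of_le inf_le_right
  have hli : LinearIndependent k fun i : s => (X i : MvPolynomial (Fin n) k) :=
    (linearIndependent_X (Fin n) k).comp _ Subtype.val_injective
  have hspan : Submodule.span k (Set.range fun i : s => (X i : MvPolynomial (Fin n) k)) ≤ T :=
    Submodule.span_le.2 <| Set.range_subset_iff.2 fun i =>
      ⟨hs i i.2, (mem_homogeneousSubmodule 1 _).2 (isHomogeneous_X k _)⟩
  have hcard : s.card ≤ Module.finrank k T := by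
    simpa [finrank_span_eq_card hli] using Submodule.finrank_mono hspan
  have := finrank_homogeneousSubmodule_one (k := k) (n := n)
  omega

end HilbertFunction

/-- The variables `x₀, x₁, y₀, y₁, y₂` are numbered `0, …, 4`. -/
noncomputable def cubicF (k : Type*) [CommRing k] : MvPolynomial (Fin 5) k :=
  X 0 ^ 2 * X 2 - (X 0 + X 1) ^ 2 * X 3 + X 1 ^ 2 * X 4

section CubicF

variable {k : Type*} [CommRing k]

local notation "I" => quadricApolarIdeal (cubicF k)

theorem cubicF_X_mul_X_mem_of_two_le {i j : Fin 5} (hi : 2 ≤ (i : ℕ)) (hj : 2 ≤ (j : ℕ)) :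
    X i * X j ∈ I := by
  apply X_mul_X_mem_quadricApolarIdeal
  fin_cases i <;> fin_cases j <;> simp_all [cubicF, pderiv_X]

theorem cubicF_mixed_quadrics_mem :
    X 1 * X 2 ∈ I ∧ X 0 * X 4 ∈ I ∧ (X 0 - X 1) * X 3 ∈ I ∧
      X 0 * X 2 + X 0 * X 3 + X 1 * X 4 ∈ I := by
  refine ⟨X_mul_X_mem_quadricApolarIdeal ?_, X_mul_X_mem_quadricApolarIdeal ?_,
    mem_quadricApolarIdeal ?_ ?_, mem_quadricApolarIdeal ?_ ?_⟩
  · simp [cubicF, pderiv_X]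
  · simp [cubicF, pderiv_X]
  · simp [sub_mul, contractMap_X_mul_X, cubicF, pderiv_X]
  · exact ((isHomogeneous_X k 0).sub (isHomogeneous_X k 1)).mul (isHomogeneous_X k 3)
  · simp [contractMap_X_mul_X, cubicF, pderiv_X]
  · have hX (i : Fin 5) := isHomogeneous_X k i
    exact (((hX 0).mul (hX 2)).add ((hX 0).mul (hX 3))).add ((hX 1).mul (hX 4))

theorem cubicF_cubes_mem :
    X 0 ^ 3 * X 2 ∈ I ∧ X 1 ^ 3 * X 3 ∈ I ∧ X 1 ^ 3 * X 4 ∈ I := by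
  obtain ⟨h₁, h₂, h₃, h₄⟩ := cubicF_mixed_quadrics_mem (k := k)
  simp only [← Ideal.Quotient.eq_zero_iff_mem, map_add, map_sub, map_mul, map_pow] at *
  set a₀ := Ideal.Quotient.mk I (X 0)
  set a₁ := Ideal.Quotient.mk I (X 1)
  refine ⟨?_, ?_, ?_⟩
  -- each combination factors through `α₀²α₁β₁ = α₀α₁ h₄ − α₀² h₁ − α₁² h₂`
  · linear_combination
      a₀ ^ 2 * h₁ + (a₁ ^ 2 - a₀ * a₁) * h₂ - a₀ ^ 2 * h₃ + (a₀ ^ 2 - a₀ * a₁) * h₄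
  · linear_combination -a₀ ^ 2 * h₁ - a₁ ^ 2 * h₂ - (a₀ * a₁ + a₁ ^ 2) * h₃ + a₀ * a₁ * h₄
  · linear_combination
      (a₀ ^ 2 - a₀ * a₁) * h₁ + a₁ ^ 2 * h₂ + a₀ * a₁ * h₃ + (a₁ ^ 2 - a₀ * a₁) * h₄

theorem X_mem_satur_of_linear_and_cube {l a : Fin 5} (hl : 2 ≤ (l : ℕ))
    {ℓ : MvPolynomial (Fin 5) k} (hℓ : ℓ * X l ∈ I) (ha : X a ^ 3 * X l ∈ I)
    (hα : X 0 ∈ Ideal.span {X a} ⊔ Ideal.span {ℓ} ∧ X 1 ∈ Ideal.span {X a} ⊔ Ideal.span {ℓ}) :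
    X l ∈ satur I := by
  set Y : Ideal (MvPolynomial (Fin 5) k) := Ideal.span (X '' {i | 2 ≤ (i : ℕ)})
  have hY (i : Fin 5) (hi : 2 ≤ (i : ℕ)) : X i ∈ Ideal.span {X a} ⊔ Ideal.span {ℓ} ⊔ Y :=
    Ideal.mem_sup_right (Ideal.subset_span ⟨i, hi, rfl⟩)
  refine mem_satur_of_pow_le_colon (m := 3) <|
    Ideal.pow_le_of_le_span_singleton_sup (L := Ideal.span {ℓ} ⊔ Y) ?_
      (Submodule.mem_colon_singleton.2 ha) (sup_le ?_ ?_)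
  · rw [← sup_assoc]
    refine irrel_le_iff.2 fun i => ?_
    fin_cases i
    exacts [Ideal.mem_sup_left hα.1, Ideal.mem_sup_left hα.2, hY 2 le_rfl, hY 3 (by simp),
      hY 4 (by simp)]
  · exact (Ideal.span_singleton_le_iff_mem _).2 (Submodule.mem_colon_singleton.2 hℓ)
  · exact Ideal.span_le.2 fun _ ⟨i, hi, e⟩ =>
      e ▸ Submodule.mem_colon_singleton.2 (cubicF_X_mul_X_mem_of_two_le hi hl)

theorem X_mem_satur_quadricApolarIdeal_cubicF :
    X 2 ∈ satur I ∧ X 3 ∈ satur I ∧ X 4 ∈ satur I := by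
  obtain ⟨h₁₂, h₀₄, h₃, -⟩ := cubicF_mixed_quadrics_mem (k := k)
  obtain ⟨c₂, c₃, c₄⟩ := cubicF_cubes_mem (k := k)
  have mem_left {x y : MvPolynomial (Fin 5) k} : x ∈ Ideal.span {x} ⊔ Ideal.span {y} :=
    Ideal.mem_sup_left (Ideal.mem_span_singleton_self x)
  have mem_right {x y : MvPolynomial (Fin 5) k} : y ∈ Ideal.span {x} ⊔ Ideal.span {y} :=
    Ideal.mem_sup_right (Ideal.mem_span_singleton_self y)
  have hX₀ : (X 0 : MvPolynomial (Fin 5) k) ∈ Ideal.span {X 1} ⊔ Ideal.span {X 0 - X 1} :=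
    Submodule.mem_sup.2 ⟨_, Ideal.mem_span_singleton_self _, _, Ideal.mem_span_singleton_self _,
      add_sub_cancel _ _⟩
  exact ⟨X_mem_satur_of_linear_and_cube le_rfl h₁₂ c₂ ⟨mem_left, mem_right⟩,
    X_mem_satur_of_linear_and_cube (by simp) h₃ c₃ ⟨hX₀, mem_left⟩,
    X_mem_satur_of_linear_and_cube (by simp) h₀₄ c₄ ⟨mem_right, mem_left⟩⟩

end CubicF

theorem stmt4_general (k : Type*) [Field k] :
    let x0 : MvPolynomial (Fin 5) k := X 0
    let x1 : MvPolynomial (Fin 5) k := X 1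
    let y0 : MvPolynomial (Fin 5) k := X 2
    let y1 : MvPolynomial (Fin 5) k := X 3
    let y2 : MvPolynomial (Fin 5) k := X 4
    let f := x0 ^ 2 * y0 - (x0 + x1) ^ 2 * y1 + x1 ^ 2 * y2
    let b0 : MvPolynomial (Fin 5) k := X 2
    let b1 : MvPolynomial (Fin 5) k := X 3
    let b2 : MvPolynomial (Fin 5) k := X 4
    let J : Ideal (MvPolynomial (Fin 5) k) :=
      satur (Ideal.span ((LinearMap.ker (contractMap f) ⊓ homogeneousSubmodule (Fin 5) k 2 :
        Submodule k (MvPolynomial (Fin 5) k)) : Set (MvPolynomial (Fin 5) k)))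
    b0 ∈ J ∧ b1 ∈ J ∧ b2 ∈ J ∧ HFq k J 1 ≤ 2 := by
  intro x0 x1 y0 y1 y2 f b0 b1 b2 J
  obtain ⟨h₀, h₁, h₂⟩ : b0 ∈ J ∧ b1 ∈ J ∧ b2 ∈ J := X_mem_satur_quadricApolarIdeal_cubicF
  refine ⟨h₀, h₁, h₂, HFq_one_le_of_X_mem J {2, 3, 4} ?_⟩
  simp only [Finset.mem_insert, Finset.mem_singleton]
  rintro i (rfl | rfl | rfl) <;> assumption

/-- with `J` the saturation of the ideal generated by the degree 2 part of
the apolar ideal of `f = x₀²y₀ − (x₀+x₁)²y₁ + x₁²y₂`, we have `β₀, β₁, β₂ ∈ J`, and the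
Hilbert function of `Sym V⋆ / J` in degree 1 is at most 2. -/
theorem stmt4 (k : Type*) [Field k] [IsAlgClosed k] [CharZero k] :
    let x0 : MvPolynomial (Fin 5) k := X 0
    let x1 : MvPolynomial (Fin 5) k := X 1
    let y0 : MvPolynomial (Fin 5) k := X 2
    let y1 : MvPolynomial (Fin 5) k := X 3
    let y2 : MvPolynomial (Fin 5) k := X 4
    let f := x0 ^ 2 * y0 - (x0 + x1) ^ 2 * y1 + x1 ^ 2 * y2
    let b0 : MvPolynomial (Fin 5) k := X 2
    let b1 : MvPolynomial (Fin 5) k := X 3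
    let b2 : MvPolynomial (Fin 5) k := X 4
    let J : Ideal (MvPolynomial (Fin 5) k) :=
      satur (Ideal.span ((LinearMap.ker (contractMap f) ⊓ homogeneousSubmodule (Fin 5) k 2 :
        Submodule k (MvPolynomial (Fin 5) k)) : Set (MvPolynomial (Fin 5) k)))
    b0 ∈ J ∧ b1 ∈ J ∧ b2 ∈ J ∧ HFq k J 1 ≤ 2 :=
  stmt4_general k
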